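/- For the 16-QAM index code with encoding matrix C = [[1,-2],[-2,1]] over ℤ/4ℤ, for each fixed value a ∈ ℤ/4ℤ of w₁, any two distinct codewords x(a,w₂) = (a - 2w₂, -2a + w₂) mod 4 and x(a,w₂'), w₂ ≠ w₂', embedded in ℤ² via centered representatives, are at Euclidean distance at least 2. -/
import Mathlib


/-- Centered representative (in `{-2,-1,0,1} ⊂ ℤ`) of an element of `ℤ/4ℤ`. -/
def centRep (a : ZMod 4) : ℤ := Int.bmod (a.val : ℤ) 4

/-- The 16-QAM codeword for messages `(w₁, w₂) = (a, w)`. -/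
def codeword (a w : ZMod 4) : Fin 2 → ZMod 4 := ![a - 2 * w, -2 * a + w]

/-- Euclidean norm of a vector in `ℤ²`. -/
noncomputable def intNorm (v : Fin 2 → ℤ) : ℝ :=
  Real.sqrt (∑ i, ((v i : ℝ)) ^ 2)

lemma key (a w w' : ZMod 4) (h : w ≠ w') :
    (4 : ℤ) ≤ (centRep (codeword a w 0) - centRep (codeword a w' 0)) ^ 2 +
      (centRep (codeword a w 1) - centRep (codeword a w' 1)) ^ 2 := by
  revert h; revert a w w'; decide

/-- For the 16-QAM index code `C = [[1,-2],[-2,1]]` over `ℤ/4ℤ`, any two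
distinct codewords sharing the same first message `a`, embedded in `ℤ²` via
centered representatives, are at Euclidean distance at least `2`. -/
theorem sixteenQAM_subcode_distance (a w w' : ZMod 4) (h : w ≠ w') :
    2 ≤ intNorm (fun i => centRep (codeword a w i) - centRep (codeword a w' i)) := by
  unfold intNorm
  rw [Fin.sum_univ_two]
  have hk := key a w w' h
  have h4 : (4 : ℝ) ≤
      ((centRep (codeword a w 0) - centRep (codeword a w' 0) : ℤ) : ℝ) ^ 2 +
      ((centRep (codeword a w 1) - centRep (codeword a w' 1) : ℤ) : ℝ) ^ 2 := by
    exact_mod_cast hk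
  have := Real.sqrt_le_sqrt h4
  simpa [Real.sqrt_eq_iff_eq_sq, show Real.sqrt 4 = 2 by
    rw [show (4:ℝ) = 2^2 by norm_num, Real.sqrt_sq (by norm_num)]] using this
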